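/- arXiv:2310.14363 — 5 statements merged into one kernel-verified Lean document; each statement's English description precedes it below -/
import Mathlib

section
/- Let (R, δ) be a differential commutative von Neumann regular ring. Then every maximal ideal M of R is a differential ideal, i.e. δ(M) ⊆ M. -/
theorem stmt_2 (R : Type*) [CommRing R]
    (hvnr : ∀ x : R, ∃ y : R, x * y * x = x)
    (δ : R → R)
    (hadd : ∀ a b : R, δ (a + b) = δ a + δ b)
    (hmul : ∀ a b : R, δ (a * b) = δ a * b + a * δ b)
    (M : Ideal R) (hM : M.IsMaximal) :
    ∀ r ∈ M, δ r ∈ M := by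
  intro r hr
  obtain ⟨y, hy⟩ := hvnr r
  set e := r * y with he
  have her : e * r = r := by rw [he]; linear_combination hy
  have hee : e * e = e := by rw [he]; linear_combination y * hy
  have h1 : δ e = δ e * e + e * δ e := by rw [← hmul, hee]
  have hde : e * δ e = 0 := by linear_combination (-e) * h1 - 2 * δ e * hee
  have hder : δ e * r = 0 := by
    calc δ e * r = δ e * (e * r) := by rw [her]
      _ = (e * δ e) * r := by ring
      _ = 0 := by rw [hde, zero_mul]
  have hkey : δ r = e * δ r := by
    have h := hmul e r
    rw [her] at h
    linear_combination h + hder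
  rw [hkey]
  exact M.mul_mem_right (δ r) (M.mul_mem_right y hr)
end

section
/- Let R be a commutative von Neumann regular ring and B(R) its Boolean algebra of idempotents. If M_B is a maximal ideal of B(R) (as a Boolean ring), then the ideal M_B·R generated by M_B in R is a maximal ideal of R. -/
/-- `MB` is a maximal ideal of the Boolean ring of idempotents of `R`
(with addition `e ⊕ f = e + f - 2ef` and multiplication inherited from `R`). -/
def IsMaximalBooleanIdeal (R : Type*) [CommRing R] (MB : Set R) : Prop :=
  (∀ e ∈ MB, e * e = e) ∧
  (0 : R) ∈ MB ∧
  (1 : R) ∉ MB ∧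
  (∀ e ∈ MB, ∀ f ∈ MB, e + f - 2 * e * f ∈ MB) ∧
  (∀ e ∈ MB, ∀ f : R, f * f = f → e * f ∈ MB) ∧
  (∀ e : R, e * e = e → e ∈ MB ∨ 1 - e ∈ MB)

theorem stmt_5 (R : Type*) [CommRing R]
    (hvnr : ∀ x : R, ∃ y : R, x * y * x = x)
    (MB : Set R) (hMB : IsMaximalBooleanIdeal R MB) :
    (Ideal.span MB).IsMaximal := by
  obtain ⟨hid, h0, h1, hadd, hmul, hmax⟩ := hMB
  -- MB is closed under sup: e + f - e*f ∈ MB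
  have hsup : ∀ e ∈ MB, ∀ f ∈ MB, e + f - e * f ∈ MB := by
    intro e he f hf
    have h1' := hadd e he f hf
    have h2' := hmul e he f (hid f hf)
    have h3' := hadd _ h1' _ h2'
    have he2 := hid e he
    have hf2 := hid f hf
    have heq : (e + f - 2*e*f) + (e*f) - 2*((e + f - 2*e*f))*(e*f) = e + f - e*f := by
      linear_combination (4*f*f - 2*f) * he2 + 2*e * hf2
    rwa [heq] at h3'
  -- every element of span MB is fixed by multiplication by some idempotent in MB
  have key : ∀ x ∈ Ideal.span MB, ∃ e ∈ MB, x * e = x := by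
    intro x hx
    induction hx using Submodule.span_induction with
    | mem z hz => exact ⟨z, hz, hid z hz⟩
    | zero => exact ⟨0, h0, by ring⟩
    | add a b _ _ ha hb =>
      obtain ⟨e, he, hae⟩ := ha
      obtain ⟨f, hf, hbf⟩ := hb
      refine ⟨e + f - e * f, hsup e he f hf, ?_⟩
      linear_combination (1 - f) * hae + (1 - e) * hbf
    | smul r a _ ha =>
      obtain ⟨e, he, hae⟩ := ha
      refine ⟨e, he, ?_⟩
      rw [smul_eq_mul, mul_assoc, hae]
  rw [Ideal.isMaximal_iff]
  constructor
  · intro h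
    obtain ⟨e, he, hee⟩ := key 1 h
    rw [one_mul] at hee
    exact h1 (hee ▸ he)
  · intro J x hIJ hxI hxJ
    obtain ⟨y, hy⟩ := hvnr x
    have heid : (x * y) * (x * y) = x * y := by linear_combination y * hy
    rcases hmax (x * y) heid with he | hne
    · exfalso
      apply hxI
      have : x * (x * y) ∈ Ideal.span MB :=
        Ideal.mul_mem_left _ x (Ideal.subset_span he)
      have hx : x * (x * y) = x := by linear_combination hy
      rwa [hx] at this
    · have h1J : (1 : R) - x * y ∈ J := hIJ (Ideal.subset_span hne)
      have h2J : x * y ∈ J := Ideal.mul_mem_right y J hxJ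
      have : (1 : R) - x * y + x * y ∈ J := J.add_mem h1J h2J
      simpa using this
end

section
/- Let R be a commutative von Neumann regular ring that is a subdirect product of integral domains. For a, b ∈ R, an element c ∈ R satisfies: c equals a on the set of coordinates where b vanishes and c equals 0 elsewhere, if and only if there exists d ∈ R with bdb = b, bc = 0 and (c − a)(1 − bd) = 0. -/
theorem stmt_8 (X : Type*) (A : X → Type*)
    [∀ x, CommRing (A x)] [∀ x, IsDomain (A x)]
    (R : Subring (∀ x, A x))
    (hsub : ∀ x : X, Function.Surjective (fun f : R => (f : ∀ x, A x) x))
    (hvnr : ∀ r : R, ∃ s : R, r * s * r = r)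
    (a b c : R) :
    ((∀ x : X, ((b : ∀ x, A x) x = 0 → (c : ∀ x, A x) x = (a : ∀ x, A x) x) ∧
        ((b : ∀ x, A x) x ≠ 0 → (c : ∀ x, A x) x = 0)) ↔
      ∃ d : R, b * d * b = b ∧ b * c = 0 ∧ (c - a) * (1 - b * d) = 0) := by
  constructor
  · intro h
    obtain ⟨d, hd⟩ := hvnr b
    refine ⟨d, hd, ?_, ?_⟩
    · ext x
      simp only [Subring.coe_mul, Pi.mul_apply, ZeroMemClass.coe_zero, Pi.zero_apply]
      by_cases hb : (b : ∀ x, A x) x = 0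
      · rw [hb, zero_mul]
      · rw [(h x).2 hb, mul_zero]
    · ext x
      have hdx : (b : ∀ x, A x) x * (d : ∀ x, A x) x * (b : ∀ x, A x) x = (b : ∀ x, A x) x :=
        congrFun (congrArg Subtype.val hd) x
      push_cast
      simp only [Pi.mul_apply, Pi.sub_apply, Pi.one_apply, Pi.zero_apply]
      by_cases hb : (b : ∀ x, A x) x = 0
      · rw [(h x).1 hb, sub_self, zero_mul]
      · have : (b : ∀ x, A x) x * ((b : ∀ x, A x) x * (d : ∀ x, A x) x - 1) = 0 := by
          linear_combination hdx
        rcases mul_eq_zero.mp this with h' | h'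
        · exact absurd h' hb
        · rw [sub_eq_zero] at h'
          rw [h', sub_self, mul_zero]
  · rintro ⟨d, hd, hbc, hca⟩ x
    have hdx : (b : ∀ x, A x) x * (d : ∀ x, A x) x * (b : ∀ x, A x) x = (b : ∀ x, A x) x :=
      congrFun (congrArg Subtype.val hd) x
    have hbcx : (b : ∀ x, A x) x * (c : ∀ x, A x) x = 0 := by
      have := congrFun (congrArg Subtype.val hbc) x
      simpa using this
    have hcax : ((c : ∀ x, A x) x - (a : ∀ x, A x) x) *
        (1 - (b : ∀ x, A x) x * (d : ∀ x, A x) x) = 0 := by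
      have := congrFun (congrArg Subtype.val hca) x
      simpa using this
    constructor
    · intro hb
      rw [hb, zero_mul, sub_zero, mul_one, sub_eq_zero] at hcax
      exact hcax
    · intro hb
      rcases mul_eq_zero.mp hbcx with h' | h'
      · exact absurd h' hb
      · exact h'
end

section
/- Let R be a commutative von Neumann regular ring with no nonzero nilpotent elements realized as R = ∏^s_{x∈X} R/xR over its maximal ideal space. If q is a polynomial over R and for every maximal ideal M the image of q in (R/M)[y] has a root, and R has the patchwork property over a compact Boolean space of maximal ideals where solution sets of equations are clopen, then q has a root in R. -/
/-!
Lift a root of `q` modulo each maximal ideal `M` to some `r_M ∈ R`; then `q(r_M)` vanishes on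
the clopen neighbourhood `[q(r_M) = 0]` of `M`. Finitely many of these cover the compact space
of maximal ideals, and the patchwork property glues the local roots into one `h` with `q(h)` in
every maximal ideal. In a von Neumann regular ring the Jacobson radical is zero, so `q(h) = 0`.
-/

open Polynomial

def HasPatchwork (R : Type*) [CommRing R] : Prop :=
  ∀ f g : R, ∀ U : Set (MaximalSpectrum R), IsClopen U →
    ∃ h : R, (∀ M ∈ U, h - f ∈ M.asIdeal) ∧ (∀ M ∉ U, h - g ∈ M.asIdeal)

theorem eq_zero_of_mem_jacobson_bot_of_regular {R : Type*} [CommRing R] {a y : R}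
    (hy : a * y * a = a) (ha : a ∈ (⊥ : Ideal R).jacobson) : a = 0 := by
  obtain ⟨u, hu⟩ := Ideal.mem_jacobson_bot.mp ha (-y)
  have hkill : a * (a * -y + 1) = 0 := by linear_combination -hy
  calc a = a * (a * -y + 1) * ↑u⁻¹ := by rw [← hu, mul_assoc, Units.mul_inv, mul_one]
    _ = 0 := by rw [hkill, zero_mul]

theorem eq_zero_of_forall_mem_maximalSpectrum {R : Type*} [CommRing R]
    (hvnr : ∀ x : R, ∃ y : R, x * y * x = x) {a : R}
    (ha : ∀ M : MaximalSpectrum R, a ∈ M.asIdeal) : a = 0 := by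
  obtain ⟨y, hy⟩ := hvnr a
  refine eq_zero_of_mem_jacobson_bot_of_regular hy (Ideal.mem_sInf.mpr ?_)
  rintro J ⟨-, hJ⟩
  exact ha ⟨J, hJ⟩

namespace Polynomial

variable {R : Type*} [CommRing R] (q : R[X])

theorem eval_mem_iff_of_sub_mem {I : Ideal R} {f h : R} (hfh : h - f ∈ I) :
    q.eval h ∈ I ↔ q.eval f ∈ I := by
  obtain ⟨c, hc⟩ := sub_dvd_eval_sub h f q
  have hdiff : q.eval h - q.eval f ∈ I := hc ▸ I.mul_mem_right c hfh
  exact ⟨fun hh => by simpa using I.sub_mem hh hdiff, fun hf => by simpa using I.add_mem hdiff hf⟩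

theorem exists_eval_mem_of_isRoot_map (I : Ideal R)
    (hroot : ∃ r : R ⧸ I, (q.map (Ideal.Quotient.mk I)).eval r = 0) :
    ∃ r : R, q.eval r ∈ I := by
  obtain ⟨r, hr⟩ := hroot
  obtain ⟨r, rfl⟩ := Ideal.Quotient.mk_surjective r
  refine ⟨r, Ideal.Quotient.eq_zero_iff_mem.mp ?_⟩
  rwa [eval_map, eval₂_hom] at hr

/-- The set `[q(f) = 0]` of the paper. -/
def rootLocus (f : R) : Set (MaximalSpectrum R) :=
  {M | q.eval f ∈ M.asIdeal}

variable {q}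

theorem exists_rootLocus_union_subset (hpatch : HasPatchwork R) {f : R}
    (hf : IsClopen (q.rootLocus f)) (g : R) :
    ∃ h : R, q.rootLocus f ∪ q.rootLocus g ⊆ q.rootLocus h := by
  obtain ⟨h, hhf, hhg⟩ := hpatch f g _ hf
  refine ⟨h, fun M hM => ?_⟩
  by_cases hMf : M ∈ q.rootLocus f
  · exact (eval_mem_iff_of_sub_mem q (hhf M hMf)).mpr hMf
  · exact (eval_mem_iff_of_sub_mem q (hhg M hMf)).mpr (hM.resolve_left hMf)

theorem exists_biUnion_rootLocus_subset (hpatch : HasPatchwork R)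
    (hclopen : ∀ f : R, IsClopen (q.rootLocus f)) {ι : Type*} (r : ι → R) (s : Finset ι) :
    ∃ h : R, ⋃ i ∈ s, q.rootLocus (r i) ⊆ q.rootLocus h := by
  classical
  induction s using Finset.induction with
  | empty => exact ⟨0, by simp⟩
  | insert i s _ ih =>
    obtain ⟨g, hg⟩ := ih
    obtain ⟨h, hh⟩ := exists_rootLocus_union_subset hpatch (hclopen (r i)) g
    refine ⟨h, ?_⟩
    rw [Finset.set_biUnion_insert]
    exact (Set.union_subset_union_right _ hg).trans hh

theorem exists_rootLocus_eq_univ [CompactSpace (MaximalSpectrum R)] (hpatch : HasPatchwork R)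
    (hclopen : ∀ f : R, IsClopen (q.rootLocus f))
    (hlocal : ∀ M : MaximalSpectrum R, ∃ r : R, M ∈ q.rootLocus r) :
    ∃ h : R, q.rootLocus h = Set.univ := by
  choose r hr using hlocal
  obtain ⟨t, ht⟩ := isCompact_univ.elim_finite_subcover (fun M => q.rootLocus (r M))
    (fun M => (hclopen (r M)).isOpen) fun M _ => Set.mem_iUnion.mpr ⟨M, hr M⟩
  obtain ⟨h, hh⟩ := exists_biUnion_rootLocus_subset hpatch hclopen r t
  exact ⟨h, Set.univ_subset_iff.mp (ht.trans hh)⟩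

end Polynomial

theorem stmt_14_general (R : Type*) [CommRing R]
    (hvnr : ∀ x : R, ∃ y : R, x * y * x = x)
    (hcpt : CompactSpace (MaximalSpectrum R))
    (q : Polynomial R)
    -- solution sets of (polynomial) equations are clopen:
    (hclopen : ∀ r : R, IsClopen {M : MaximalSpectrum R | r ∈ M.asIdeal})
    -- patchwork property:
    (hpatch : ∀ f g : R, ∀ U : Set (MaximalSpectrum R), IsClopen U →
      ∃ h : R, (∀ M ∈ U, h - f ∈ M.asIdeal) ∧ (∀ M ∉ U, h - g ∈ M.asIdeal))
    -- in every quotient field R/M the image of q has a root: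
    (hroot : ∀ M : MaximalSpectrum R,
      ∃ r : R ⧸ M.asIdeal, (q.map (Ideal.Quotient.mk M.asIdeal)).eval r = 0) :
    ∃ r : R, q.eval r = 0 := by
  obtain ⟨h, hh⟩ := q.exists_rootLocus_eq_univ hpatch (fun f => hclopen (q.eval f))
    fun M => q.exists_eval_mem_of_isRoot_map M.asIdeal (hroot M)
  refine ⟨h, eq_zero_of_forall_mem_maximalSpectrum hvnr fun M => ?_⟩
  exact (Set.eq_univ_iff_forall.mp hh M : M ∈ q.rootLocus h)

theorem stmt_14 (R : Type*) [CommRing R]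
    (hvnr : ∀ x : R, ∃ y : R, x * y * x = x)
    (hred : ∀ r : R, (∃ n : ℕ, r ^ n = 0) → r = 0)
    (hcpt : CompactSpace (MaximalSpectrum R))
    (q : Polynomial R)
    -- solution sets of (polynomial) equations are clopen:
    (hclopen : ∀ r : R, IsClopen {M : MaximalSpectrum R | r ∈ M.asIdeal})
    -- patchwork property:
    (hpatch : ∀ f g : R, ∀ U : Set (MaximalSpectrum R), IsClopen U →
      ∃ h : R, (∀ M ∈ U, h - f ∈ M.asIdeal) ∧ (∀ M ∉ U, h - g ∈ M.asIdeal))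
    -- in every quotient field R/M the image of q has a root:
    (hroot : ∀ M : MaximalSpectrum R,
      ∃ r : R ⧸ M.asIdeal, (q.map (Ideal.Quotient.mk M.asIdeal)).eval r = 0) :
    ∃ r : R, q.eval r = 0 :=
  stmt_14_general R hvnr hcpt q hclopen hpatch hroot
end

section
/- Let R be a commutative von Neumann regular ring, δ a derivation on R, and M a maximal ideal of R. Then δ induces a well-defined derivation on the quotient field R/M, so that R/M is naturally a differential field. -/
theorem stmt_19 (R : Type*) [CommRing R]
    (hvnr : ∀ x : R, ∃ y : R, x * y * x = x)
    (δ : R → R)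
    (hadd : ∀ a b : R, δ (a + b) = δ a + δ b)
    (hmul : ∀ a b : R, δ (a * b) = δ a * b + a * δ b)
    (M : Ideal R) (hM : M.IsMaximal) :
    (IsField (R ⧸ M)) ∧
    ∃ D : R ⧸ M → R ⧸ M,
      (∀ r : R, D (Ideal.Quotient.mk M r) = Ideal.Quotient.mk M (δ r)) ∧
      (∀ a b : R ⧸ M, D (a + b) = D a + D b) ∧
      (∀ a b : R ⧸ M, D (a * b) = D a * b + a * D b) := by
  haveI := hM
  have hfield : IsField (R ⧸ M) := (Ideal.Quotient.maximal_ideal_iff_isField_quotient M).mp hM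
  -- δ maps M into M
  have hker : ∀ x ∈ M, δ x ∈ M := by
    intro x hx
    obtain ⟨y, hy⟩ := hvnr x
    have h0 : Ideal.Quotient.mk M x = 0 := Ideal.Quotient.eq_zero_iff_mem.mpr hx
    have : Ideal.Quotient.mk M (δ x) = 0 := by
      conv_lhs => rw [← hy, hmul (x * y) x]
      simp [map_add, map_mul, h0]
    exact Ideal.Quotient.eq_zero_iff_mem.mp this
  have hsub : ∀ a b : R, δ (a - b) = δ a - δ b := by
    intro a b
    have h := hadd (a - b) b
    rw [sub_add_cancel] at h
    exact eq_sub_of_add_eq h.symm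
  have hwd : ∀ a b : R, Setoid.r (self := Submodule.quotientRel M) a b →
      Ideal.Quotient.mk M (δ a) = Ideal.Quotient.mk M (δ b) := by
    intro a b h
    have h' : a - b ∈ M := (Submodule.quotientRel_def M).mp h
    rw [Ideal.Quotient.mk_eq_mk_iff_sub_mem, ← hsub]
    exact hker _ h' 
  refine ⟨hfield, fun a => Quotient.liftOn' a (fun r => Ideal.Quotient.mk M (δ r)) hwd,
    fun r => rfl, ?_, ?_⟩
  · intro a b
    obtain ⟨a, rfl⟩ := Ideal.Quotient.mk_surjective a
    obtain ⟨b, rfl⟩ := Ideal.Quotient.mk_surjective b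
    show Quotient.liftOn' (Ideal.Quotient.mk M (a + b)) _ _ = _
    simp only [Quotient.liftOn'_mk'']
    change Ideal.Quotient.mk M (δ (a + b)) = Ideal.Quotient.mk M (δ a) + Ideal.Quotient.mk M (δ b)
    rw [hadd, map_add]
  · intro a b
    obtain ⟨a, rfl⟩ := Ideal.Quotient.mk_surjective a
    obtain ⟨b, rfl⟩ := Ideal.Quotient.mk_surjective b
    show Quotient.liftOn' (Ideal.Quotient.mk M (a * b)) _ _ = _
    change Ideal.Quotient.mk M (δ (a * b)) =
      Ideal.Quotient.mk M (δ a) * Ideal.Quotient.mk M b +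
      Ideal.Quotient.mk M a * Ideal.Quotient.mk M (δ b)
    rw [hmul, map_add, map_mul, map_mul]
end
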